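/- arXiv:1707.07985 — 4 statements merged into one kernel-verified Lean document; each statement's English description precedes it below -/
import Mathlib

section
/- There exists a universal constant C > 0 with the following property. Let ε ∈ (0, 1/4], δ₁, δ₂ ∈ (0, ε], b₁, b₂ ∈ ℝ, and define m̃(w) = b₁ ( 1/(w − δ₁) − 1/w ) + b₂ ( 1/w − 1/(w + δ₂) ) for w ∈ ℂ. If ∫_{D₁(0)} |m̃(w)| dA(w) ≤ K for some K > 0, then |b₁δ₁ + b₂δ₂| ≤ C K / |log ε| and |b₁ − b₂| δ₁ δ₂ ≤ C K ε. -/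
/-!
Put `A = b₁δ₁ + b₂δ₂` and `B = (b₁ - b₂)δ₁δ₂`, so that `m̃(w) = (A w + B) / (w (w - δ₁) (w + δ₂))`.
On the annulus `2ε < |w| < 1` both poles are within `|w|/2` of the origin, hence
`|m̃(w)| ≥ (4/9) |A w + B| / |w|³`. The annulus is symmetric under `w ↦ -w`, and
`|A w + B| + |-A w + B| ≥ 2 max(|A| |w|, |B|)`, so the integral of `|A w + B| / |w|³` over it is at
least `|A| ∫ |w|⁻² = 2π |A| log (1/2ε)` and at least `|B| ∫ |w|⁻³ = 2π |B| (1/2ε - 1)`.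
For `ε ≤ 1/4` these are `≥ π |A| |log ε|` and `≥ π |B| / 2ε`, which gives the theorem with `C = 2`.
-/

open MeasureTheory Metric Set

variable {r R : ℝ}

lemma locallyIntegrable_inv_sub (a : ℂ) : LocallyIntegrable (fun w : ℂ => (w - a)⁻¹) := by
  have h₀ : LocallyIntegrable (fun w : ℂ => w⁻¹) (volume : Measure ℂ) :=
    locallyIntegrable_of_norm_le_rpow (C := 1) (α := 1) (by simp) (by simp)
      (.of_forall fun w => by simp [Real.rpow_neg_one])
      (measurable_inv.aestronglyMeasurable)
  rw [locallyIntegrable_iff] at h₀ ⊢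
  intro K hK
  have h := h₀ _ (hK.image (continuous_sub_right a))
  rw [← (measurePreserving_sub_right volume a).integrableOn_comp_preimage
    (measurableEmbedding_subRight a)] at h
  exact h.mono_set (subset_preimage_image _ _)

lemma integral_annulus_fun_norm (f : ℝ → ℝ) (hr : 0 ≤ r) (hrR : r ≤ R) :
    ∫ w in ball (0 : ℂ) R \ closedBall 0 r, f ‖w‖ = 2 * Real.pi * ∫ y in r..R, y * f y := by
  have hmem : ∀ w : ℂ, w ∈ ball (0 : ℂ) R \ closedBall 0 r ↔ ‖w‖ ∈ Ioo r R := by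
    intro w
    simp only [mem_sdiff, mem_ball_zero_iff, mem_closedBall_zero_iff, mem_Ioo, not_le]
    tauto
  have h := integral_fun_norm_addHaar (volume : Measure ℂ) ((Ioo r R).indicator f)
  have hind : (fun w : ℂ => (Ioo r R).indicator f ‖w‖)
      = (ball (0 : ℂ) R \ closedBall 0 r).indicator (fun w => f ‖w‖) := by
    ext w
    by_cases hw : ‖w‖ ∈ Ioo r R <;> simp [indicator, hw, hmem]
  rw [hind, integral_indicator (measurableSet_ball.diff measurableSet_closedBall)] at h
  have hvol : (volume : Measure ℂ).real (ball 0 1) = Real.pi := by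
    simp [Measure.real, Complex.volume_ball]
  have hIoi : ∫ y in Ioi (0 : ℝ), y ^ (2 - 1) • (Ioo r R).indicator f y
      = ∫ y in Ioo r R, y * f y := by
    rw [← integral_indicator measurableSet_Ioo, ← integral_indicator measurableSet_Ioi]
    congr 1
    ext y
    by_cases hy : y ∈ Ioo r R
    · simp [hy, hr.trans_lt hy.1]
    · simp [hy]
  rw [h, hvol, Complex.finrank_real_complex, hIoi, intervalIntegral.integral_of_le hrR,
    integral_Ioc_eq_integral_Ioo, nsmul_eq_mul, smul_eq_mul]
  ring

lemma integrableOn_annulus_of_continuousOn {E F : Type*} [NormedAddCommGroup E] [ProperSpace E]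
    [MeasurableSpace E] [OpensMeasurableSpace E] [NormedAddCommGroup F] {μ : Measure E}
    [IsFiniteMeasureOnCompacts μ] {g : E → F} (hg : ContinuousOn g {0}ᶜ) (hr : 0 < r)
    (R : ℝ) : IntegrableOn g (ball 0 R \ closedBall 0 r) μ := by
  have hK : IsCompact (closedBall (0 : E) R \ ball 0 r) :=
    (isCompact_closedBall _ _).diff isOpen_ball
  refine ((hg.mono ?_).integrableOn_compact hK).mono_set
    (sdiff_subset_sdiff ball_subset_closedBall ball_subset_closedBall)
  intro w hw h0
  rw [mem_singleton_iff] at h0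
  exact hw.2 (by simpa [h0] using hr)

lemma setIntegral_add_comp_neg_of_neg_eq
    {G : Type*} [AddGroup G] [MeasurableSpace G] [MeasurableNeg G] {μ : Measure G}
    [μ.IsNegInvariant] {f : G → ℝ} {s : Set G} (hf : IntegrableOn f s μ) (hs : -s = s) :
    ∫ x in s, (f x + f (-x)) ∂μ = 2 * ∫ x in s, f x ∂μ := by
  have hneg := Measure.measurePreserving_neg μ
  have hpre : Neg.neg ⁻¹' s = s := by rw [Set.neg_preimage, hs]
  have hf' : IntegrableOn (fun x => f (-x)) s μ := by
    rw [← hpre]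
    exact (hneg.integrableOn_comp_preimage measurableEmbedding_neg).2 hf
  have hint : ∫ x in s, f (-x) ∂μ = ∫ x in s, f x ∂μ := by
    simpa only [hpre] using hneg.setIntegral_preimage_emb measurableEmbedding_neg f s
  rw [integral_add hf hf', hint, two_mul]

section Annulus

lemma integral_annulus_inv_norm_sq (hr : 0 < r) (hrR : r ≤ R) :
    ∫ w in ball (0 : ℂ) R \ closedBall 0 r, (‖w‖ ^ 2)⁻¹ = 2 * Real.pi * Real.log (R / r) := by
  rw [integral_annulus_fun_norm (fun y => (y ^ 2)⁻¹) hr.le hrR,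
    ← integral_inv_of_pos hr (hr.trans_le hrR)]
  congr 1
  refine intervalIntegral.integral_congr fun y hy => ?_
  have hy0 : y ≠ 0 := (hr.trans_le (uIcc_of_le hrR ▸ hy).1).ne'
  field_simp

lemma integral_annulus_inv_norm_cube (hr : 0 < r) (hrR : r ≤ R) :
    ∫ w in ball (0 : ℂ) R \ closedBall 0 r, (‖w‖ ^ 3)⁻¹ = 2 * Real.pi * (r⁻¹ - R⁻¹) := by
  have h0 : (0 : ℝ) ∉ uIcc r R := by
    rw [uIcc_of_le hrR]; exact fun h => hr.not_ge h.1
  have hzpow : ∫ y in r..R, y ^ (-2 : ℤ) = r⁻¹ - R⁻¹ := by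
    rw [integral_zpow (.inr ⟨by norm_num, h0⟩)]
    norm_num
    ring
  rw [integral_annulus_fun_norm (fun y => (y ^ 3)⁻¹) hr.le hrR, ← hzpow]
  congr 1
  refine intervalIntegral.integral_congr fun y hy => ?_
  have hy0 : y ≠ 0 := fun h => h0 (h ▸ hy)
  simp only [zpow_neg, zpow_ofNat]
  field_simp

variable (A B : ℂ)

lemma integral_annulus_le_of_two_mul_le {φ : ℂ → ℝ} (hφ : ∀ w, 0 ≤ φ w) (hr : 0 < r)
    (h : ∀ w ≠ 0, 2 * φ w ≤ ‖A * w + B‖ / ‖w‖ ^ 3 + ‖A * -w + B‖ / ‖-w‖ ^ 3) :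
    ∫ w in ball (0 : ℂ) R \ closedBall 0 r, φ w
      ≤ ∫ w in ball (0 : ℂ) R \ closedBall 0 r, ‖A * w + B‖ / ‖w‖ ^ 3 := by
  set S := ball (0 : ℂ) R \ closedBall 0 r
  have hS : -S = S := by ext w; simp [S, Set.mem_neg]
  have hg : IntegrableOn (fun w : ℂ => ‖A * w + B‖ / ‖w‖ ^ 3) S :=
    integrableOn_annulus_of_continuousOn (by fun_prop (disch := simp_all)) hr R
  have h2 : ∫ w in S, 2 * φ w ≤ ∫ w in S, (‖A * w + B‖ / ‖w‖ ^ 3 + ‖A * -w + B‖ / ‖-w‖ ^ 3) := by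
    refine integral_mono_of_nonneg (.of_forall fun w => by simpa using hφ w)
      ?_ (ae_restrict_of_forall_mem (measurableSet_ball.diff measurableSet_closedBall) ?_)
    · exact integrableOn_annulus_of_continuousOn (by fun_prop (disch := simp_all)) hr R
    · intro w hw
      exact h w (ne_of_mem_of_not_mem hw (by simp [hr.le]))
  rw [setIntegral_add_comp_neg_of_neg_eq hg hS, integral_const_mul] at h2
  linarith

lemma norm_mul_log_le_integral_annulus (hr : 0 < r) (hrR : r ≤ R) :
    ‖A‖ * (2 * Real.pi * Real.log (R / r))
      ≤ ∫ w in ball (0 : ℂ) R \ closedBall 0 r, ‖A * w + B‖ / ‖w‖ ^ 3 := by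
  rw [← integral_annulus_inv_norm_sq hr hrR, ← integral_const_mul]
  refine integral_annulus_le_of_two_mul_le A B (fun w => by positivity) hr fun w hw => ?_
  have hw' : 0 < ‖w‖ := norm_pos_iff.2 hw
  have htri : 2 * ‖A‖ * ‖w‖ ≤ ‖A * w + B‖ + ‖A * -w + B‖ := by
    calc 2 * ‖A‖ * ‖w‖ = ‖(A * w + B) - (A * -w + B)‖ := by
          rw [show (A * w + B) - (A * -w + B) = 2 * A * w by ring, norm_mul, norm_mul]
          norm_num
      _ ≤ _ := norm_sub_le _ _
  rw [norm_neg, ← add_div, le_div_iff₀ (by positivity)]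
  calc 2 * (‖A‖ * (‖w‖ ^ 2)⁻¹) * ‖w‖ ^ 3 = 2 * ‖A‖ * ‖w‖ := by field_simp
    _ ≤ _ := htri

lemma norm_mul_inv_sub_inv_le_integral_annulus (hr : 0 < r) (hrR : r ≤ R) :
    ‖B‖ * (2 * Real.pi * (r⁻¹ - R⁻¹))
      ≤ ∫ w in ball (0 : ℂ) R \ closedBall 0 r, ‖A * w + B‖ / ‖w‖ ^ 3 := by
  rw [← integral_annulus_inv_norm_cube hr hrR, ← integral_const_mul]
  refine integral_annulus_le_of_two_mul_le A B (fun w => by positivity) hr fun w hw => ?_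
  have hw' : 0 < ‖w‖ := norm_pos_iff.2 hw
  have htri : 2 * ‖B‖ ≤ ‖A * w + B‖ + ‖A * -w + B‖ := by
    calc 2 * ‖B‖ = ‖(A * w + B) + (A * -w + B)‖ := by
          rw [show (A * w + B) + (A * -w + B) = 2 * B by ring, norm_mul]
          norm_num
      _ ≤ _ := norm_add_le _ _
  rw [norm_neg, ← add_div, le_div_iff₀ (by positivity)]
  calc 2 * (‖B‖ * (‖w‖ ^ 3)⁻¹) * ‖w‖ ^ 3 = 2 * ‖B‖ := by field_simp
    _ ≤ _ := htri

end Annulus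

noncomputable def mTilde (b₁ b₂ d₁ d₂ w : ℂ) : ℂ :=
  b₁ * (1 / (w - d₁) - 1 / w) + b₂ * (1 / w - 1 / (w + d₂))

section mTilde

variable (b₁ b₂ d₁ d₂ : ℂ)

lemma locallyIntegrable_mTilde : LocallyIntegrable (mTilde b₁ b₂ d₁ d₂) := by
  have h := locallyIntegrable_inv_sub
  have heq : mTilde b₁ b₂ d₁ d₂ = b₁ • ((fun w => (w - d₁)⁻¹) - fun w => (w - 0)⁻¹)
      + b₂ • ((fun w => (w - 0)⁻¹) - fun w => (w - -d₂)⁻¹) := by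
    ext w; simp [mTilde]
  rw [heq]
  exact (((h _).sub (h _)).smul _).add (((h _).sub (h _)).smul _)

lemma mTilde_eq {w : ℂ} (hw : w ≠ 0) (h₁ : w - d₁ ≠ 0) (h₂ : w + d₂ ≠ 0) :
    mTilde b₁ b₂ d₁ d₂ w
      = ((b₁ * d₁ + b₂ * d₂) * w + (b₁ - b₂) * d₁ * d₂) / (w * (w - d₁) * (w + d₂)) := by
  rw [mTilde]
  field_simp
  ring

lemma norm_mTilde_ge {w : ℂ} (hw : w ≠ 0) (h₁ : 2 * ‖d₁‖ ≤ ‖w‖) (h₂ : 2 * ‖d₂‖ ≤ ‖w‖) :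
    4 / 9 * (‖(b₁ * d₁ + b₂ * d₂) * w + (b₁ - b₂) * d₁ * d₂‖ / ‖w‖ ^ 3)
      ≤ ‖mTilde b₁ b₂ d₁ d₂ w‖ := by
  have hw' : 0 < ‖w‖ := norm_pos_iff.2 hw
  have hd₁ : ‖w - d₁‖ ≤ 3 / 2 * ‖w‖ := by linarith [norm_sub_le w d₁]
  have hd₂ : ‖w + d₂‖ ≤ 3 / 2 * ‖w‖ := by linarith [norm_add_le w d₂]
  have hn₁ : w - d₁ ≠ 0 := fun h => by
    rw [sub_eq_zero] at h; subst h; linarith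
  have hn₂ : w + d₂ ≠ 0 := fun h => by
    rw [add_eq_zero_iff_eq_neg] at h; subst h; simp only [norm_neg] at h₂ hw'; linarith
  have hden : ‖w * (w - d₁) * (w + d₂)‖ ≤ 9 / 4 * ‖w‖ ^ 3 := by
    rw [norm_mul, norm_mul]
    calc ‖w‖ * ‖w - d₁‖ * ‖w + d₂‖ ≤ ‖w‖ * (3 / 2 * ‖w‖) * (3 / 2 * ‖w‖) := by gcongr
      _ = 9 / 4 * ‖w‖ ^ 3 := by ring
  rw [mTilde_eq b₁ b₂ d₁ d₂ hw hn₁ hn₂, norm_div, mul_div_assoc', div_le_div_iff₀ (by positivity)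
    (by simp [hw, hn₁, hn₂])]
  calc _ ≤ 4 / 9 * ‖(b₁ * d₁ + b₂ * d₂) * w + (b₁ - b₂) * d₁ * d₂‖ * (9 / 4 * ‖w‖ ^ 3) := by
        gcongr
    _ = _ := by ring

lemma integral_annulus_le_integral_norm_mTilde (hr : 0 < r) (h₁ : 2 * ‖d₁‖ ≤ r)
    (h₂ : 2 * ‖d₂‖ ≤ r) :
    4 / 9 * ∫ w in ball (0 : ℂ) R \ closedBall 0 r,
        ‖(b₁ * d₁ + b₂ * d₂) * w + (b₁ - b₂) * d₁ * d₂‖ / ‖w‖ ^ 3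
      ≤ ∫ w in ball (0 : ℂ) R, ‖mTilde b₁ b₂ d₁ d₂ w‖ := by
  have hm : IntegrableOn (fun w => ‖mTilde b₁ b₂ d₁ d₂ w‖) (ball (0 : ℂ) R) :=
    IntegrableOn.mono_set (((locallyIntegrable_mTilde b₁ b₂ d₁ d₂).integrableOn_isCompact
      (isCompact_closedBall 0 R)).norm) ball_subset_closedBall
  rw [← integral_const_mul]
  calc _ ≤ ∫ w in ball (0 : ℂ) R \ closedBall 0 r, ‖mTilde b₁ b₂ d₁ d₂ w‖ := by
        refine integral_mono_of_nonneg (.of_forall fun w => by positivity)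
          (hm.mono_set sdiff_subset)
          (ae_restrict_of_forall_mem (measurableSet_ball.diff measurableSet_closedBall) ?_)
        intro w hw
        have hrw : r < ‖w‖ := by simpa using hw.2
        exact norm_mTilde_ge b₁ b₂ d₁ d₂ (norm_pos_iff.1 (hr.trans hrw)) (h₁.trans hrw.le)
          (h₂.trans hrw.le)
    _ ≤ _ := setIntegral_mono_set hm (.of_forall fun w => norm_nonneg _) sdiff_subset.eventuallyLE

lemma norm_mul_log_le_integral_norm_mTilde (hr : 0 < r) (hrR : r ≤ R) (h₁ : 2 * ‖d₁‖ ≤ r)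
    (h₂ : 2 * ‖d₂‖ ≤ r) :
    4 / 9 * (‖b₁ * d₁ + b₂ * d₂‖ * (2 * Real.pi * Real.log (R / r)))
      ≤ ∫ w in ball (0 : ℂ) R, ‖mTilde b₁ b₂ d₁ d₂ w‖ :=
  (mul_le_mul_of_nonneg_left (norm_mul_log_le_integral_annulus _ _ hr hrR) (by norm_num)).trans
    (integral_annulus_le_integral_norm_mTilde b₁ b₂ d₁ d₂ hr h₁ h₂)

lemma norm_mul_inv_sub_inv_le_integral_norm_mTilde (hr : 0 < r) (hrR : r ≤ R)
    (h₁ : 2 * ‖d₁‖ ≤ r) (h₂ : 2 * ‖d₂‖ ≤ r) :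
    4 / 9 * (‖(b₁ - b₂) * d₁ * d₂‖ * (2 * Real.pi * (r⁻¹ - R⁻¹)))
      ≤ ∫ w in ball (0 : ℂ) R, ‖mTilde b₁ b₂ d₁ d₂ w‖ :=
  (mul_le_mul_of_nonneg_left (norm_mul_inv_sub_inv_le_integral_annulus _ _ hr hrR)
    (by norm_num)).trans (integral_annulus_le_integral_norm_mTilde b₁ b₂ d₁ d₂ hr h₁ h₂)

end mTilde

lemma abs_log_le_two_mul_log_inv_two_mul {ε : ℝ} (hε : 0 < ε) (hε4 : ε ≤ 1 / 4) :
    |Real.log ε| ≤ 2 * Real.log (1 / (2 * ε)) := by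
  have hlog4 : Real.log ε ≤ Real.log (1 / 4) := Real.log_le_log hε hε4
  have hlog2 : Real.log (1 / 4) = -2 * Real.log 2 := by
    rw [one_div, Real.log_inv, show (4 : ℝ) = 2 ^ 2 by norm_num, Real.log_pow]; ring
  rw [one_div, Real.log_inv, Real.log_mul two_ne_zero hε.ne', abs_of_neg]
  · linarith
  · linarith [Real.log_pos one_lt_two]

/-- quantitative control of the coefficients of the model function
`m̃(w) = b₁(1/(w−δ₁) − 1/w) + b₂(1/w − 1/(w+δ₂))` in terms of its `L¹`-norm on the
unit disc. -/
theorem stmt6 : ∃ C > (0:ℝ), ∀ ε δ₁ δ₂ b₁ b₂ K : ℝ,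
    0 < ε → ε ≤ 1 / 4 → 0 < δ₁ → δ₁ ≤ ε → 0 < δ₂ → δ₂ ≤ ε → 0 < K →
    (∫ w in Metric.ball (0:ℂ) 1,
        ‖(b₁ : ℂ) * (1 / (w - (δ₁ : ℂ)) - 1 / w) + (b₂ : ℂ) * (1 / w - 1 / (w + (δ₂ : ℂ)))‖) ≤ K →
    |b₁ * δ₁ + b₂ * δ₂| ≤ C * K / |Real.log ε| ∧ |b₁ - b₂| * δ₁ * δ₂ ≤ C * K * ε := by
  refine ⟨2, two_pos, fun ε δ₁ δ₂ b₁ b₂ K hε hε4 h₁ h₁' h₂ h₂' _ hK => ?_⟩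
  have hr : 0 < 2 * ε := by positivity
  have hr1 : 2 * ε ≤ 1 := by linarith
  have hd (δ : ℝ) (h : 0 < δ) (h' : δ ≤ ε) : 2 * ‖(δ : ℂ)‖ ≤ 2 * ε := by
    rw [Complex.norm_real, Real.norm_of_nonneg h.le]; linarith
  have hA := (norm_mul_log_le_integral_norm_mTilde b₁ b₂ δ₁ δ₂ hr hr1 (hd δ₁ h₁ h₁')
    (hd δ₂ h₂ h₂')).trans hK
  have hB := (norm_mul_inv_sub_inv_le_integral_norm_mTilde b₁ b₂ δ₁ δ₂ hr hr1 (hd δ₁ h₁ h₁')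
    (hd δ₂ h₂ h₂')).trans hK
  simp only [← Complex.ofReal_mul, ← Complex.ofReal_add, ← Complex.ofReal_sub, Complex.norm_real,
    Real.norm_eq_abs, abs_mul, abs_of_pos h₁, abs_of_pos h₂] at hA hB
  have hπ := Real.pi_gt_three
  constructor
  · have hL := abs_log_le_two_mul_log_inv_two_mul hε hε4
    have hℓ : 0 ≤ |b₁ * δ₁ + b₂ * δ₂| * Real.log (1 / (2 * ε)) :=
      mul_nonneg (abs_nonneg _) (by linarith [abs_nonneg (Real.log ε)])
    rw [le_div_iff₀ (abs_pos.2 (Real.log_neg hε (by linarith)).ne)]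
    nlinarith [mul_le_mul_of_nonneg_left hL (abs_nonneg (b₁ * δ₁ + b₂ * δ₂)),
      mul_le_mul_of_nonneg_left hπ.le hℓ]
  · set u := (2 * ε)⁻¹
    have hu : 2 * ε * u = 1 := mul_inv_cancel₀ hr.ne'
    have hu2 : 2 ≤ u := by rw [le_inv_comm₀ two_pos hr]; linarith
    have hb : 0 ≤ |b₁ - b₂| * δ₁ * δ₂ := by positivity
    nlinarith [mul_le_mul_of_nonneg_left hπ.le (mul_nonneg hb (by linarith : (0:ℝ) ≤ u)),
      mul_nonneg hb (by linarith : (0:ℝ) ≤ u - 2)]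
end

section
/- There exist universal constants c, C > 0 such that for all ε₁, ε₂ with 0 < ε₁ ≤ ε₂ ≤ 2π − (ε₁ + ε₂), the 3×3 real matrix A = [[1, 1, 1], [cos ε₁, 1, cos ε₂], [−sin ε₁, 0, sin ε₂]] satisfies: |det A| ≥ c ε₁ ε₂² > 0 (so A is invertible); the entries of its inverse satisfy |(A^{−1})_{ij}| ≤ C ε₁^{−1} ε₂^{−1} for i = 1, 2 and all j = 1, 2, 3, and |(A^{−1})_{3j}| ≤ C ε₂^{−2} for all j = 1, 2, 3. -/
open Real

private lemma sin_half_identity (u v : ℝ) :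
    Real.sin (2*u) + Real.sin (2*v) - Real.sin (2*u + 2*v) =
      4 * Real.sin u * Real.sin v * Real.sin (u+v) := by
  have h : (2*u + 2*v) = 2*(u+v) := by ring
  rw [h, Real.sin_two_mul, Real.sin_two_mul, Real.sin_two_mul, Real.sin_add, Real.cos_add]
  linear_combination (-2*Real.sin u*Real.cos u) * (Real.sin_sq_add_cos_sq v)
    + (-2*Real.sin v*Real.cos v) * (Real.sin_sq_add_cos_sq u)

private lemma sin_ge_half {x : ℝ} (hx : 0 ≤ x) (hx' : x ≤ π/2) : x/2 ≤ Real.sin x := by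
  have h1 := Real.mul_le_sin hx hx'
  have h2 : π ≤ 4 := Real.pi_le_four
  have h3 : (0:ℝ) < π := Real.pi_pos
  have h4 : (1:ℝ)/2 ≤ 2/π := by
    rw [div_le_div_iff₀ (by norm_num) h3]; linarith
  have h5 := mul_le_mul_of_nonneg_right h4 hx
  linarith

private lemma det_lower {a b : ℝ} (ha : 0 < a) (hab : a ≤ b) (h2 : a + 2*b ≤ 2*π) :
    1/16 * a * b^2 ≤ Real.sin a + Real.sin b - Real.sin (a+b) := by
  have hπ : (0:ℝ) < π := Real.pi_pos
  have hbπ : b < π := by linarith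
  have hs1 : a/4 ≤ Real.sin (a/2) := by
    have := sin_ge_half (x := a/2) (by linarith) (by linarith)
    linarith
  have hs2 : b/4 ≤ Real.sin (b/2) := by
    have := sin_ge_half (x := b/2) (by linarith) (by linarith)
    linarith
  have hs3 : Real.sin (b/2) ≤ Real.sin ((a+b)/2) := by
    by_cases h : (a+b)/2 ≤ π/2
    · exact Real.sin_le_sin_of_le_of_le_pi_div_two (by linarith) h (by linarith)
    · push_neg at h
      rw [← Real.sin_pi_sub ((a+b)/2)]
      exact Real.sin_le_sin_of_le_of_le_pi_div_two (by linarith) (by linarith) (by linarith)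
  have key : Real.sin a + Real.sin b - Real.sin (a+b) =
      4 * Real.sin (a/2) * Real.sin (b/2) * Real.sin ((a+b)/2) := by
    have := sin_half_identity (a/2) (b/2)
    have e1 : 2*(a/2) = a := by ring
    have e2 : 2*(b/2) = b := by ring
    have e4 : a/2 + b/2 = (a+b)/2 := by ring
    rw [e1, e2, e4] at this
    exact this
  rw [key]
  have t2 : 0 ≤ Real.sin (a/2) := le_trans (by linarith) hs1
  have t1 : 0 ≤ Real.sin (b/2) := le_trans (by linarith) hs2
  have m1 : a/4 * (b/4) ≤ Real.sin (a/2) * Real.sin (b/2) :=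
    mul_le_mul hs1 hs2 (by linarith) t2
  have m2 : a/4 * (b/4) * (b/4) ≤ Real.sin (a/2) * Real.sin (b/2) * Real.sin ((a+b)/2) :=
    mul_le_mul m1 (le_trans hs2 hs3) (by linarith) (mul_nonneg t2 t1)
  nlinarith [m2]

private lemma abs_cos_sub_one (x : ℝ) : |Real.cos x - 1| ≤ x^2/2 := by
  have h1 := Real.one_sub_sq_div_two_le_cos (x := x)
  have h2 := Real.cos_le_one x
  rw [abs_le]
  constructor <;> nlinarith [sq_nonneg x]

set_option maxHeartbeats 1000000 in
/-- quantitative invertibility of the matrix arising from evaluating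
`1, cos, sin` at the three angles `-ε₁, 0, ε₂`. -/
theorem stmt12 : ∃ c > (0:ℝ), ∃ C > (0:ℝ), ∀ ε₁ ε₂ : ℝ,
    0 < ε₁ → ε₁ ≤ ε₂ → ε₂ ≤ 2 * Real.pi - (ε₁ + ε₂) →
    ∀ A : Matrix (Fin 3) (Fin 3) ℝ,
      A = !![1, 1, 1; Real.cos ε₁, 1, Real.cos ε₂; -Real.sin ε₁, 0, Real.sin ε₂] →
      c * ε₁ * ε₂ ^ 2 ≤ |A.det| ∧ A.det ≠ 0 ∧
        ∀ j : Fin 3, |A⁻¹ 0 j| ≤ C / (ε₁ * ε₂) ∧ |A⁻¹ 1 j| ≤ C / (ε₁ * ε₂) ∧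
          |A⁻¹ 2 j| ≤ C / ε₂ ^ 2 := by
  refine ⟨1/16, by norm_num, 64, by norm_num, ?_⟩
  intro e1 e2 h1 h12 hsum A hA
  have hπ4 : π ≤ 4 := Real.pi_le_four
  have h2pos : 0 < e2 := lt_of_lt_of_le h1 h12
  have he2 : e2 ≤ 4 := by linarith
  have hdet_eq : A.det = Real.sin e1 + Real.sin e2 - Real.sin (e1+e2) := by
    subst hA
    rw [Matrix.det_fin_three]
    simp only [Fin.isValue, Matrix.of_apply, Matrix.cons_val', Matrix.cons_val_zero,
      Matrix.cons_val_one, Matrix.head_cons, Matrix.empty_val', Matrix.cons_val_fin_one,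
      Matrix.head_fin_const, Matrix.cons_val_two, Matrix.tail_cons]
    rw [Real.sin_add]
    ring
  have hdetlb : 1/16 * e1 * e2^2 ≤ A.det := by
    rw [hdet_eq]
    exact det_lower h1 h12 (by linarith)
  have hdetpos : 0 < A.det := lt_of_lt_of_le (by positivity) hdetlb
  refine ⟨by rw [abs_of_pos hdetpos]; exact hdetlb, ne_of_gt hdetpos, ?_⟩
  have hinv : A⁻¹ = A.det⁻¹ • A.adjugate := by
    rw [Matrix.inv_def, Ring.inverse_eq_inv]
  have hs1a : |Real.sin e1| ≤ e1 := (Real.abs_sin_le_abs).trans_eq (abs_of_pos h1)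
  have hs2a : |Real.sin e2| ≤ e2 := (Real.abs_sin_le_abs).trans_eq (abs_of_pos h2pos)
  have hc1a : |Real.cos e1 - 1| ≤ e1^2/2 := abs_cos_sub_one e1
  have hc2a : |Real.cos e2 - 1| ≤ e2^2/2 := abs_cos_sub_one e2
  have hcc1 : |Real.cos e1| ≤ 1 := Real.abs_cos_le_one e1
  have hcc2 : |Real.cos e2| ≤ 1 := Real.abs_cos_le_one e2
  have hadj : A.adjugate = !![Real.sin e2, -Real.sin e2, Real.cos e2 - 1;
      -(Real.cos e1 * Real.sin e2) + Real.cos e2 * -Real.sin e1,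
      Real.sin e2 + Real.sin e1, -Real.cos e2 + Real.cos e1;
      Real.sin e1, -Real.sin e1, 1 - Real.cos e1] := by
    subst hA
    rw [Matrix.adjugate_fin_three_of]
    norm_num
  have B01 : |-Real.sin e2| ≤ e2 := by rwa [abs_neg]
  have B10 : |-(Real.cos e1 * Real.sin e2) + Real.cos e2 * -Real.sin e1| ≤ 2*e2 := by
    have h := abs_add_le (-(Real.cos e1 * Real.sin e2)) (Real.cos e2 * -Real.sin e1)
    rw [abs_neg, abs_mul, abs_mul, abs_neg] at h
    nlinarith [abs_nonneg (Real.sin e1), abs_nonneg (Real.sin e2),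
      abs_nonneg (Real.cos e1), abs_nonneg (Real.cos e2)]
  have B11 : |Real.sin e2 + Real.sin e1| ≤ 2*e2 := by
    have h := abs_add_le (Real.sin e2) (Real.sin e1)
    linarith
  have B12 : |-Real.cos e2 + Real.cos e1| ≤ e2^2 := by
    have h : -Real.cos e2 + Real.cos e1 = (Real.cos e1 - 1) - (Real.cos e2 - 1) := by ring
    rw [h]
    have h2 := abs_sub (Real.cos e1 - 1) (Real.cos e2 - 1)
    nlinarith [sq_nonneg e1, sq_nonneg e2, mul_self_nonneg (e2-e1)]
  have B21 : |-Real.sin e1| ≤ e1 := by rwa [abs_neg]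
  have B22 : |1 - Real.cos e1| ≤ e1*e2/2 := by
    rw [abs_sub_comm]
    nlinarith [mul_pos h1 h1]
  have hcube : (0:ℝ) ≤ e1 * e2^2 * (4 - e2) :=
    mul_nonneg (mul_nonneg h1.le (sq_nonneg e2)) (by linarith)
  have hkey : ∀ X B r : ℝ, 0 < r → |X| ≤ B → B * r ≤ 64 * A.det → |A.det⁻¹ * X| ≤ 64 / r := by
    intro X B r hr hXB hBr
    have hrw : A.det * (64/r) = 64*A.det/r := by ring
    rw [abs_mul, abs_inv, abs_of_pos hdetpos, inv_mul_le_iff₀ hdetpos, hrw, le_div_iff₀ hr]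
    nlinarith [mul_le_mul_of_nonneg_right hXB hr.le]
  intro j
  fin_cases j <;> refine ⟨?_, ?_, ?_⟩ <;>
    rw [hinv, Matrix.smul_apply, hadj, smul_eq_mul] <;>
    simp only [Fin.zero_eta, Fin.mk_one, Fin.reduceFinMk, Fin.isValue, Matrix.of_apply,
      Matrix.cons_val', Matrix.cons_val_zero, Matrix.cons_val_one, Matrix.head_cons,
      Matrix.empty_val', Matrix.cons_val_fin_one, Matrix.head_fin_const, Matrix.cons_val_two,
      Matrix.tail_cons]
  · exact hkey _ e2 (e1*e2) (by positivity) hs2a (by nlinarith [hdetlb])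
  · exact hkey _ (2*e2) (e1*e2) (by positivity) B10 (by nlinarith [hdetlb])
  · exact hkey _ e1 (e2^2) (by positivity) hs1a (by nlinarith [hdetlb])
  · exact hkey _ e2 (e1*e2) (by positivity) B01 (by nlinarith [hdetlb])
  · exact hkey _ (2*e2) (e1*e2) (by positivity) B11 (by nlinarith [hdetlb])
  · exact hkey _ e1 (e2^2) (by positivity) B21 (by nlinarith [hdetlb])
  · exact hkey _ (e2^2/2) (e1*e2) (by positivity) hc2a (by nlinarith [hdetlb, hcube])
  · exact hkey _ (e2^2) (e1*e2) (by positivity) B12 (by nlinarith [hdetlb, hcube])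
  · exact hkey _ (e1*e2/2) (e2^2) (by positivity) B22 (by nlinarith [hdetlb, hcube])
end

section
/- Let Y⁻, Y⁺ > 0 and let u : [−Y⁻, Y⁺] × S¹ → ℝⁿ be smooth, with Hopf function φ = |∂_s u|² − |∂_θ u|² − 2i ⟨∂_s u, ∂_θ u⟩. Then: (i) pointwise, ∂̄φ := ½(∂_s + i∂_θ)φ = ⟨∂_s u − i ∂_θ u, Δ_{g₀} u⟩, where Δ_{g₀} u = ∂_s² u + ∂_θ² u and the pairing is the complex-bilinear extension of the Euclidean inner product; (ii) consequently ∫∫ |∂̄φ| dθ ds ≤ 2 E(u)^{1/2} ( ∫∫ |Δ_{g₀} u|² dθ ds )^{1/2}, where E(u) = ½∫∫(|∂_s u|² + |∂_θ u|²) dθ ds; and (iii) if [−Y⁻, Y⁺] × S¹ carries a hyperbolic cylinder metric g = ρ_ℓ(s)²(ds² + dθ²) as below, then ∫∫ |∂̄φ| dθ ds ≤ C E(u)^{1/2} ‖Δ_g u‖ for a constant C depending only on ℓ₀, c₁, c₂. -/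
open MeasureTheory Filter Topology

noncomputable section

/-- The conformal factor `ρ_ℓ(s) = (ℓ/2π) cos(ℓs/2π)⁻¹` of the hyperbolic cylinder. -/
def rho (ℓ s : ℝ) : ℝ := (ℓ / (2 * Real.pi)) / Real.cos (ℓ * s / (2 * Real.pi))

/-- Partial derivative in the first (`s`) variable. -/
def pdS {E : Type*} [NormedAddCommGroup E] [NormedSpace ℝ E] (u : ℝ × ℝ → E) (q : ℝ × ℝ) : E :=
  fderiv ℝ u q (1, 0)

/-- Partial derivative in the second (`θ`) variable. -/
def pdT {E : Type*} [NormedAddCommGroup E] [NormedSpace ℝ E] (u : ℝ × ℝ → E) (q : ℝ × ℝ) : E :=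
  fderiv ℝ u q (0, 1)

/-- The flat Laplacian `Δ_{g₀} u = ∂_s² u + ∂_θ² u`. -/
def lapl {E : Type*} [NormedAddCommGroup E] [NormedSpace ℝ E] (u : ℝ × ℝ → E) (q : ℝ × ℝ) : E :=
  pdS (pdS u) q + pdT (pdT u) q

/-- A fundamental domain for the cylinder `[-Y⁻, Y⁺] × S¹`. -/
def cylSet (Ym Yp : ℝ) : Set (ℝ × ℝ) := Set.Icc (-Ym) Yp ×ˢ Set.Icc 0 (2 * Real.pi)

/-- `2π`-periodicity in the angular variable. -/
def Periodic2 {E : Type*} (u : ℝ × ℝ → E) : Prop := ∀ s θ : ℝ, u (s, θ + 2 * Real.pi) = u (s, θ)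

/-- The Dirichlet energy `E(u) = ½ ∫∫ (|∂_s u|² + |∂_θ u|²) dθ ds`. -/
def dirEnergy {n : ℕ} (Ym Yp : ℝ) (u : ℝ × ℝ → EuclideanSpace ℝ (Fin n)) : ℝ :=
  (1 / 2) * ∫ q in cylSet Ym Yp, (‖pdS u q‖ ^ 2 + ‖pdT u q‖ ^ 2)

/-- The `L²(C,g)`-norm `‖Δ_g u‖` of the tension field. -/
def tensionN {n : ℕ} (ℓ Ym Yp : ℝ) (u : ℝ × ℝ → EuclideanSpace ℝ (Fin n)) : ℝ :=
  Real.sqrt (∫ q in cylSet Ym Yp, ((rho ℓ q.1) ^ 2)⁻¹ * ‖lapl u q‖ ^ 2)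

/-- The norm `‖P^H(Re Φ)‖` of the horizontal projection of the Hopf differential. -/
def horN {n : ℕ} (ℓ Ym Yp : ℝ) (u : ℝ × ℝ → EuclideanSpace ℝ (Fin n)) : ℝ :=
  2 * (Real.sqrt (4 * Real.pi * ∫ s in Set.Icc (-Ym) Yp, ((rho ℓ s) ^ 2)⁻¹))⁻¹ *
    |∫ q in cylSet Ym Yp, (‖pdS u q‖ ^ 2 - ‖pdT u q‖ ^ 2) * ((rho ℓ q.1) ^ 2)⁻¹|

/-- The mean value `M_u(s) = (2π)⁻¹ ∫₀^{2π} u(s,θ) dθ`. -/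
def meanVal {n : ℕ} (u : ℝ × ℝ → EuclideanSpace ℝ (Fin n)) (s : ℝ) : EuclideanSpace ℝ (Fin n) :=
  (2 * Real.pi)⁻¹ • ∫ θ in (0:ℝ)..(2 * Real.pi), u (s, θ)

end

noncomputable section

/-- The Hopf function `φ(u) = |∂_s u|² − |∂_θ u|² − 2i⟨∂_s u, ∂_θ u⟩`. -/
def hopfFn {n : ℕ} (u : ℝ × ℝ → EuclideanSpace ℝ (Fin n)) (q : ℝ × ℝ) : ℂ :=
  ((‖pdS u q‖ ^ 2 - ‖pdT u q‖ ^ 2 : ℝ) : ℂ) -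
    2 * Complex.I * ((inner ℝ (pdS u q) (pdT u q) : ℝ) : ℂ)

/-- The anti-holomorphic derivative `∂̄f = ½(∂_s + i∂_θ)f` of a complex valued function on
the cylinder (`z = s + iθ`). -/
def dbarC (f : ℝ × ℝ → ℂ) (q : ℝ × ℝ) : ℂ :=
  (fderiv ℝ f q (1, 0) + Complex.I * fderiv ℝ f q (0, 1)) / 2

end

/-!
With `A = ∂_s u` and `B = ∂_θ u`, the Hopf function is the complex-bilinear square
`⟨A - iB, A - iB⟩`, and by the symmetry `∂_θ A = ∂_s B` of second derivatives
`∂̄(A - iB) = ½ Δ_{g₀} u`; hence `∂̄φ = ⟨A - iB, Δ_{g₀} u⟩`. Since `|A - iB|² = |A|² + |B|²` is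
twice the energy density, Cauchy–Schwarz (pointwise, then in `L²`) gives the flat bound.
On the hyperbolic cylinder `|ℓs/2π| ≤ π/2 - c₁ℓ`, so Jordan's inequality
`cos(ℓs/2π) ≥ sin(c₁ℓ) ≥ 2c₁ℓ/π` gives `ρ_ℓ ≤ 1/(4c₁)`: the flat `L²`-norm of the tension is at
most `‖Δ_g u‖/(4c₁)`, and `C = 1/(2c₁)` works.
-/

open Real
open scoped RealInnerProductSpace ContDiff

section PartialDerivatives

variable {E : Type*} [NormedAddCommGroup E] [NormedSpace ℝ E] {u : ℝ × ℝ → E}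

lemma ContDiff.pdS {n : WithTop ℕ∞} (hu : ContDiff ℝ (n + 1) u) : ContDiff ℝ n (pdS u) :=
  (hu.fderiv_right le_rfl).clm_apply contDiff_const

lemma ContDiff.pdT {n : WithTop ℕ∞} (hu : ContDiff ℝ (n + 1) u) : ContDiff ℝ n (pdT u) :=
  (hu.fderiv_right le_rfl).clm_apply contDiff_const

lemma ContDiff.continuous_lapl (hu : ContDiff ℝ 2 u) : Continuous (lapl u) :=
  (hu.pdS.pdS (n := 0)).continuous.add (hu.pdT.pdT (n := 0)).continuous

lemma fderiv_fderiv_apply_const {q : ℝ × ℝ} (hu : DifferentiableAt ℝ (fderiv ℝ u) q)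
    (v w : ℝ × ℝ) : fderiv ℝ (fun p => fderiv ℝ u p v) q w = fderiv ℝ (fderiv ℝ u) q w v := by
  rw [fderiv_clm_apply hu (differentiableAt_const v)]
  simp

lemma pdT_pdS (hu : ContDiff ℝ 2 u) (q : ℝ × ℝ) : pdT (pdS u) q = pdS (pdT u) q := by
  have hdu : DifferentiableAt ℝ (fderiv ℝ u) q :=
    (hu.fderiv_right (m := 1) le_rfl).differentiable one_ne_zero q
  change fderiv ℝ (fun p => fderiv ℝ u p (1, 0)) q (0, 1) =
    fderiv ℝ (fun p => fderiv ℝ u p (0, 1)) q (1, 0)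
  rw [fderiv_fderiv_apply_const hdu, fderiv_fderiv_apply_const hdu]
  exact (hu.contDiffAt.isSymmSndFDerivAt (by simp)) _ _

end PartialDerivatives

section OfReal

variable {F : Type*} [NormedAddCommGroup F] [NormedSpace ℝ F] {f : F → ℝ} {x : F}

lemma DifferentiableAt.ofReal_comp (hf : DifferentiableAt ℝ f x) :
    DifferentiableAt ℝ (fun p => (f p : ℂ)) x :=
  Complex.ofRealCLM.differentiableAt.comp x hf

lemma fderiv_ofReal_comp_apply (hf : DifferentiableAt ℝ f x) (v : F) :
    fderiv ℝ (fun p => (f p : ℂ)) x v = fderiv ℝ f x v := by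
  change fderiv ℝ (Complex.ofRealCLM ∘ f) x v = _
  rw [(Complex.ofRealCLM.hasFDerivAt.comp x hf.hasFDerivAt).fderiv]
  rfl

end OfReal

section CauchySchwarz

variable {α : Type*} [MeasurableSpace α] {μ : Measure α}

theorem integral_mul_le_sqrt_mul_sqrt {f g : α → ℝ} (hf0 : 0 ≤ᵐ[μ] f) (hg0 : 0 ≤ᵐ[μ] g)
    (hf : MemLp f 2 μ) (hg : MemLp g 2 μ) :
    ∫ a, f a * g a ∂μ ≤ √(∫ a, f a ^ 2 ∂μ) * √(∫ a, g a ^ 2 ∂μ) := by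
  have h2 : ENNReal.ofReal 2 = 2 := by norm_num
  have := integral_mul_le_Lp_mul_Lq_of_nonneg (Real.HolderConjugate.two_two) hf0 hg0
    (h2 ▸ hf) (h2 ▸ hg)
  simpa only [Real.rpow_two, ← Real.sqrt_eq_rpow] using this

lemma Continuous.memLp_two_restrict [TopologicalSpace α] [T2Space α] [OpensMeasurableSpace α]
    [IsFiniteMeasureOnCompacts μ] {f : α → ℝ} (hf : Continuous f) {S : Set α} (hS : IsCompact S) :
    MemLp f 2 (μ.restrict S) :=
  (memLp_two_iff_integrable_sq hf.aestronglyMeasurable).2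
    ((hf.pow 2).continuousOn.integrableOn_compact hS)

end CauchySchwarz

lemma isCompact_cylSet (Ym Yp : ℝ) : IsCompact (cylSet Ym Yp) :=
  isCompact_Icc.prod isCompact_Icc

section Hopf

variable {n : ℕ} {u : ℝ × ℝ → EuclideanSpace ℝ (Fin n)}

lemma hopfFn_eq_inner (u : ℝ × ℝ → EuclideanSpace ℝ (Fin n)) :
    hopfFn u = fun p => ((⟪pdS u p, pdS u p⟫ - ⟪pdT u p, pdT u p⟫ : ℝ) : ℂ) -
      2 * Complex.I * ((⟪pdS u p, pdT u p⟫ : ℝ) : ℂ) := by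
  funext p
  simp only [hopfFn, real_inner_self_eq_norm_sq]

lemma fderiv_hopfFn_apply (hu : ContDiff ℝ 2 u) (q v : ℝ × ℝ) :
    fderiv ℝ (hopfFn u) q v =
      ((2 * ⟪pdS u q, fderiv ℝ (pdS u) q v⟫ - 2 * ⟪pdT u q, fderiv ℝ (pdT u) q v⟫ : ℝ) : ℂ) -
        2 * Complex.I *
          ((⟪fderiv ℝ (pdS u) q v, pdT u q⟫ + ⟪pdS u q, fderiv ℝ (pdT u) q v⟫ : ℝ) : ℂ) := by
  have hA : DifferentiableAt ℝ (pdS u) q := (hu.pdS (n := 1)).differentiable one_ne_zero q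
  have hB : DifferentiableAt ℝ (pdT u) q := (hu.pdT (n := 1)).differentiable one_ne_zero q
  have hAA := hA.inner ℝ hA
  have hBB := hB.inner ℝ hB
  have hAB := hA.inner ℝ hB
  have hRe := hAA.fun_sub hBB
  rw [hopfFn_eq_inner, fderiv_fun_sub hRe.ofReal_comp (hAB.ofReal_comp.const_mul _),
    fderiv_const_mul hAB.ofReal_comp, sub_apply, smul_apply, fderiv_ofReal_comp_apply hRe,
    fderiv_ofReal_comp_apply hAB, fderiv_fun_sub hAA hBB, sub_apply,
    fderiv_inner_apply ℝ hA hA, fderiv_inner_apply ℝ hB hB, fderiv_inner_apply ℝ hA hB,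
    real_inner_comm (pdS u q), real_inner_comm (pdT u q) (fderiv ℝ (pdT u) q v), smul_eq_mul]
  push_cast
  ring

theorem dbarC_hopfFn (hu : ContDiff ℝ 2 u) (q : ℝ × ℝ) :
    dbarC (hopfFn u) q =
      ((⟪pdS u q, lapl u q⟫ : ℝ) : ℂ) - Complex.I * ((⟪pdT u q, lapl u q⟫ : ℝ) : ℂ) := by
  have hS : ∀ w : ℝ × ℝ → EuclideanSpace ℝ (Fin n), fderiv ℝ w q (1, 0) = pdS w q := fun _ => rfl
  have hT : ∀ w : ℝ × ℝ → EuclideanSpace ℝ (Fin n), fderiv ℝ w q (0, 1) = pdT w q := fun _ => rfl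
  simp only [dbarC, fderiv_hopfFn_apply hu, hS, hT, pdT_pdS hu q, lapl, inner_add_right,
    real_inner_comm (pdT u q)]
  push_cast
  linear_combination
    (-(⟪pdT u q, pdS (pdT u) q⟫ : ℂ) - (⟪pdS u q, pdT (pdT u) q⟫ : ℂ)) * Complex.I_mul_I

lemma norm_dbarC_hopfFn_le (hu : ContDiff ℝ 2 u) (q : ℝ × ℝ) :
    ‖dbarC (hopfFn u) q‖ ≤ √(‖pdS u q‖ ^ 2 + ‖pdT u q‖ ^ 2) * ‖lapl u q‖ := by
  have hCS : ∀ v : EuclideanSpace ℝ (Fin n), ⟪v, lapl u q⟫ ^ 2 ≤ ‖v‖ ^ 2 * ‖lapl u q‖ ^ 2 :=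
    fun v => by
      rw [← mul_pow, ← sq_abs]
      exact pow_le_pow_left₀ (abs_nonneg _) (abs_real_inner_le_norm _ _) 2
  rw [dbarC_hopfFn hu, ← Real.sqrt_sq (norm_nonneg (lapl u q)), ← Real.sqrt_mul (by positivity),
    show ∀ x y : ℝ, (x : ℂ) - Complex.I * y = x + (-y : ℝ) * Complex.I from
      fun x y => by push_cast; ring,
    Complex.norm_add_mul_I]
  gcongr
  linarith [hCS (pdS u q), hCS (pdT u q), neg_sq ⟪pdT u q, lapl u q⟫]

lemma continuous_norm_dbarC_hopfFn (hu : ContDiff ℝ 2 u) :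
    Continuous fun q => ‖dbarC (hopfFn u) q‖ := by
  have hA := (hu.pdS (n := 1)).continuous
  have hB := (hu.pdT (n := 1)).continuous
  have hL := hu.continuous_lapl
  simp only [dbarC_hopfFn hu]
  fun_prop

theorem integral_norm_dbarC_hopfFn_le (hu : ContDiff ℝ 2 u) (Ym Yp : ℝ) :
    ∫ q in cylSet Ym Yp, ‖dbarC (hopfFn u) q‖ ≤
      2 * √(dirEnergy Ym Yp u) * √(∫ q in cylSet Ym Yp, ‖lapl u q‖ ^ 2) := by
  set F : ℝ × ℝ → ℝ := fun q => √(‖pdS u q‖ ^ 2 + ‖pdT u q‖ ^ 2)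
  have hS := isCompact_cylSet Ym Yp
  have hF : Continuous F := by
    have hA := (hu.pdS (n := 1)).continuous
    have hB := (hu.pdT (n := 1)).continuous
    fun_prop
  have hL : Continuous fun q => ‖lapl u q‖ := hu.continuous_lapl.norm
  have hF2 : ∫ q in cylSet Ym Yp, F q ^ 2 = 2 * dirEnergy Ym Yp u := by
    simp only [F, dirEnergy, Real.sq_sqrt (add_nonneg (sq_nonneg _) (sq_nonneg _))]
    ring
  calc ∫ q in cylSet Ym Yp, ‖dbarC (hopfFn u) q‖
      ≤ ∫ q in cylSet Ym Yp, F q * ‖lapl u q‖ :=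
        setIntegral_mono_on ((continuous_norm_dbarC_hopfFn hu).continuousOn.integrableOn_compact hS)
          ((hF.mul hL).continuousOn.integrableOn_compact hS) hS.measurableSet
          fun q _ => norm_dbarC_hopfFn_le hu q
    _ ≤ √(∫ q in cylSet Ym Yp, F q ^ 2) * √(∫ q in cylSet Ym Yp, ‖lapl u q‖ ^ 2) :=
        integral_mul_le_sqrt_mul_sqrt (.of_forall fun _ => Real.sqrt_nonneg _)
          (.of_forall fun _ => norm_nonneg _) (hF.memLp_two_restrict hS) (hL.memLp_two_restrict hS)
    _ ≤ 2 * √(dirEnergy Ym Yp u) * √(∫ q in cylSet Ym Yp, ‖lapl u q‖ ^ 2) := by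
        rw [hF2, Real.sqrt_mul zero_le_two]
        gcongr
        nlinarith [Real.sq_sqrt (zero_le_two (α := ℝ)), Real.sqrt_nonneg 2]

end Hopf

section HyperbolicCylinder

lemma two_div_pi_mul_le_cos {t x : ℝ} (hx : 0 ≤ x) (ht : |t| ≤ π / 2 - x) :
    2 / π * x ≤ cos t :=
  calc 2 / π * x ≤ sin x := mul_le_sin hx (by linarith [abs_nonneg t])
    _ = cos (π / 2 - x) := (cos_pi_div_two_sub x).symm
    _ ≤ cos |t| := cos_le_cos_of_nonneg_of_le_pi (abs_nonneg t) (by linarith [pi_pos]) ht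
    _ = cos t := cos_abs t

lemma rho_mem_Ioc {ℓ c s : ℝ} (hℓ : 0 < ℓ) (hc : 0 < c) (hs : |ℓ * s / (2 * π)| ≤ π / 2 - c * ℓ) :
    rho ℓ s ∈ Set.Ioc 0 (1 / (4 * c)) := by
  have hcos := two_div_pi_mul_le_cos (by positivity) hs
  have hpos : 0 < 2 / π * (c * ℓ) := by positivity
  refine ⟨div_pos (by positivity) (hpos.trans_le hcos), ?_⟩
  calc rho ℓ s ≤ ℓ / (2 * π) / (2 / π * (c * ℓ)) :=
        div_le_div_of_nonneg_left (by positivity) hpos hcos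
    _ = 1 / (4 * c) := by field_simp; ring

lemma abs_mul_div_two_pi_le {ℓ c cm cp s : ℝ} (hℓ : 0 < ℓ) (hcm : c ≤ cm) (hcp : c ≤ cp)
    (hs : s ∈ Set.Icc (-(2 * π / ℓ * (π / 2 - cm * ℓ))) (2 * π / ℓ * (π / 2 - cp * ℓ))) :
    |ℓ * s / (2 * π)| ≤ π / 2 - c * ℓ := by
  set t := ℓ * s / (2 * π)
  have hk : 0 < 2 * π / ℓ := by positivity
  have hst : s = 2 * π / ℓ * t := by simp only [t]; field_simp
  rw [hst, ← mul_neg] at hs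
  have := le_of_mul_le_mul_left hs.1 hk
  have := le_of_mul_le_mul_left hs.2 hk
  rw [abs_le]
  constructor <;> nlinarith

lemma continuous_inv_rho_sq (ℓ : ℝ) : Continuous fun s => (rho ℓ s ^ 2)⁻¹ := by
  simp only [rho, div_pow, inv_div]
  fun_prop

lemma sqrt_integral_sq_lapl_le {n : ℕ} {u : ℝ × ℝ → EuclideanSpace ℝ (Fin n)}
    {ℓ M Ym Yp : ℝ} (hu : ContDiff ℝ 2 u) (hM : 0 ≤ M)
    (hρ : ∀ s ∈ Set.Icc (-Ym) Yp, rho ℓ s ∈ Set.Ioc 0 M) :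
    √(∫ q in cylSet Ym Yp, ‖lapl u q‖ ^ 2) ≤ M * tensionN ℓ Ym Yp u := by
  have hS := isCompact_cylSet Ym Yp
  have hL : Continuous fun q => ‖lapl u q‖ ^ 2 := hu.continuous_lapl.norm.pow 2
  have hW : Continuous fun q : ℝ × ℝ => (rho ℓ q.1 ^ 2)⁻¹ * ‖lapl u q‖ ^ 2 :=
    ((continuous_inv_rho_sq ℓ).comp continuous_fst).mul hL
  have hle : ∫ q in cylSet Ym Yp, ‖lapl u q‖ ^ 2 ≤
      ∫ q in cylSet Ym Yp, M ^ 2 * ((rho ℓ q.1 ^ 2)⁻¹ * ‖lapl u q‖ ^ 2) := by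
    refine setIntegral_mono_on (hL.continuousOn.integrableOn_compact hS)
      ((continuous_const.mul hW).continuousOn.integrableOn_compact hS) hS.measurableSet ?_
    intro q hq
    obtain ⟨hρ0, hρM⟩ := hρ q.1 hq.1
    calc ‖lapl u q‖ ^ 2 = rho ℓ q.1 ^ 2 * ((rho ℓ q.1 ^ 2)⁻¹ * ‖lapl u q‖ ^ 2) := by
          field_simp
      _ ≤ M ^ 2 * ((rho ℓ q.1 ^ 2)⁻¹ * ‖lapl u q‖ ^ 2) := by gcongr
  rw [integral_const_mul] at hle
  calc √(∫ q in cylSet Ym Yp, ‖lapl u q‖ ^ 2)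
      ≤ √(M ^ 2 * ∫ q in cylSet Ym Yp, (rho ℓ q.1 ^ 2)⁻¹ * ‖lapl u q‖ ^ 2) :=
        Real.sqrt_le_sqrt hle
    _ = M * tensionN ℓ Ym Yp u := by
        rw [tensionN, Real.sqrt_mul (sq_nonneg M), Real.sqrt_sq hM]

end HyperbolicCylinder

theorem stmt17_general (ℓ₀ c₁ c₂ : ℝ) (hc₁ : 0 < c₁) :
    ∃ C > (0:ℝ),
      ∀ (n : ℕ) (Ym Yp : ℝ) (u : ℝ × ℝ → EuclideanSpace ℝ (Fin n)),
        0 < Ym → 0 < Yp →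
        ContDiff ℝ (⊤ : ℕ∞) u → Periodic2 u →
        (∀ q : ℝ × ℝ, dbarC (hopfFn u) q =
            ((inner ℝ (pdS u q) (lapl u q) : ℝ) : ℂ) -
              Complex.I * ((inner ℝ (pdT u q) (lapl u q) : ℝ) : ℂ)) ∧
        ((∫ q in cylSet Ym Yp, ‖dbarC (hopfFn u) q‖) ≤
          2 * Real.sqrt (dirEnergy Ym Yp u) *
            Real.sqrt (∫ q in cylSet Ym Yp, ‖lapl u q‖ ^ 2)) ∧
        ∀ ℓ cm cp : ℝ, 0 < ℓ → ℓ < ℓ₀ →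
          cm ∈ Set.Icc c₁ c₂ → cp ∈ Set.Icc c₁ c₂ →
          Ym = 2 * Real.pi / ℓ * (Real.pi / 2 - cm * ℓ) →
          Yp = 2 * Real.pi / ℓ * (Real.pi / 2 - cp * ℓ) →
          1 ≤ Ym → 1 ≤ Yp →
          (∫ q in cylSet Ym Yp, ‖dbarC (hopfFn u) q‖) ≤
            C * Real.sqrt (dirEnergy Ym Yp u) * tensionN ℓ Ym Yp u := by
  refine ⟨1 / (2 * c₁), by positivity, fun n Ym Yp u _ _ hu _ => ?_⟩
  have hu2 : ContDiff ℝ 2 u := hu.of_le (WithTop.coe_le_coe.2 le_top)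
  refine ⟨dbarC_hopfFn hu2, integral_norm_dbarC_hopfFn_le hu2 Ym Yp, ?_⟩
  rintro ℓ cm cp hℓ - hcm hcp rfl rfl - -
  have hρ : ∀ s ∈ Set.Icc _ _, rho ℓ s ∈ Set.Ioc 0 (1 / (4 * c₁)) :=
    fun s hs => rho_mem_Ioc hℓ hc₁ (abs_mul_div_two_pi_le hℓ hcm.1 hcp.1 hs)
  calc _ ≤ 2 * √(dirEnergy _ _ u) * √(∫ q in cylSet _ _, ‖lapl u q‖ ^ 2) :=
        integral_norm_dbarC_hopfFn_le hu2 _ _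
    _ ≤ 2 * √(dirEnergy _ _ u) * (1 / (4 * c₁) * tensionN ℓ _ _ u) := by
        gcongr
        exact sqrt_integral_sq_lapl_le hu2 (by positivity) hρ
    _ = 1 / (2 * c₁) * √(dirEnergy _ _ u) * tensionN ℓ _ _ u := by
        field_simp
        ring

/-- the anti-holomorphic derivative of the Hopf function is
`∂̄φ = ⟨∂_s u − i∂_θ u, Δ_{g₀}u⟩`, with the resulting `L¹`-bounds in terms of the energy and
the (flat, resp. hyperbolic) `L²`-norm of the tension field. -/
theorem stmt17 (ℓ₀ c₁ c₂ : ℝ) (hℓ₀ : 0 < ℓ₀) (hc₁ : 0 < c₁) (hc₂ : 0 < c₂) :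
    ∃ C > (0:ℝ),
      ∀ (n : ℕ) (Ym Yp : ℝ) (u : ℝ × ℝ → EuclideanSpace ℝ (Fin n)),
        0 < Ym → 0 < Yp →
        ContDiff ℝ (⊤ : ℕ∞) u → Periodic2 u →
        (∀ q : ℝ × ℝ, dbarC (hopfFn u) q =
            ((inner ℝ (pdS u q) (lapl u q) : ℝ) : ℂ) -
              Complex.I * ((inner ℝ (pdT u q) (lapl u q) : ℝ) : ℂ)) ∧
        ((∫ q in cylSet Ym Yp, ‖dbarC (hopfFn u) q‖) ≤
          2 * Real.sqrt (dirEnergy Ym Yp u) *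
            Real.sqrt (∫ q in cylSet Ym Yp, ‖lapl u q‖ ^ 2)) ∧
        ∀ ℓ cm cp : ℝ, 0 < ℓ → ℓ < ℓ₀ →
          cm ∈ Set.Icc c₁ c₂ → cp ∈ Set.Icc c₁ c₂ →
          Ym = 2 * Real.pi / ℓ * (Real.pi / 2 - cm * ℓ) →
          Yp = 2 * Real.pi / ℓ * (Real.pi / 2 - cp * ℓ) →
          1 ≤ Ym → 1 ≤ Yp →
          (∫ q in cylSet Ym Yp, ‖dbarC (hopfFn u) q‖) ≤
            C * Real.sqrt (dirEnergy Ym Yp u) * tensionN ℓ Ym Yp u :=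
  stmt17_general ℓ₀ c₁ c₂ hc₁
end

section
/- Let γ > 0, C₀ ≥ 0, E > 0, let f : [0, ∞) → (0, 1] be locally absolutely continuous with −f′(t) ≤ C₀ f(t)^{γ+1} g(t) for almost every t, where g : [0, ∞) → [0, ∞) is measurable with ∫₀^∞ g(t)² dt ≤ E. Then for every t ≥ 0, f(t) ≥ ( f(0)^{−γ} + γ C₀ (E t)^{1/2} )^{−1/γ}; in particular there exists a constant c > 0, depending only on γ, C₀, E and f(0), such that f(t) ≥ c · t^{−1/(2γ)} for all t ≥ 1. -/
/-!
Put `h = f ^ (-γ)`. Since `f` is absolutely continuous and stays positive, so is `h`, with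
`h' = -γ f ^ (-γ - 1) f' ≤ γ C₀ g` almost everywhere; integrating and applying Cauchy–Schwarz,
`h t ≤ h 0 + γ C₀ ∫₀ᵗ g ≤ h 0 + γ C₀ √(E t)`, which inverts to the first bound. For `t ≥ 1` the
right-hand side is at most `(h 0 + γ C₀ √E) √t`, which gives the decay rate `t ^ (-1 / (2γ))`.
-/

open MeasureTheory Set Filter

namespace AbsolutelyContinuousOnInterval

variable {X Y : Type*} [PseudoMetricSpace X] [PseudoMetricSpace Y] {a b : ℝ}

theorem congr {f g : ℝ → X} (hf : AbsolutelyContinuousOnInterval f a b)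
    (hfg : EqOn f g (uIcc a b)) : AbsolutelyContinuousOnInterval g a b := by
  refine hf.congr' (eventually_inf_principal.2 (Eventually.of_forall fun E hE => ?_))
  exact Finset.sum_congr rfl fun i hi => by rw [hfg (hE.1 i hi).1, hfg (hE.1 i hi).2]

theorem _root_.LipschitzOnWith.comp_absolutelyContinuousOnInterval {φ : X → Y} {s : Set X}
    {K : NNReal} {f : ℝ → X} (hφ : LipschitzOnWith K φ s)
    (hf : AbsolutelyContinuousOnInterval f a b)
    (hfs : MapsTo f (uIcc a b) s) : AbsolutelyContinuousOnInterval (φ ∘ f) a b := by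
  have hlim := Tendsto.const_mul (K : ℝ) hf
  rw [mul_zero] at hlim
  refine squeeze_zero' (Eventually.of_forall fun E => Finset.sum_nonneg fun _ _ => dist_nonneg)
    ?_ hlim
  refine eventually_inf_principal.2 (Eventually.of_forall fun E hE => ?_)
  rw [Finset.mul_sum]
  exact Finset.sum_le_sum fun i hi =>
    hφ.dist_le_mul _ (hfs (hE.1 i hi).1) _ (hfs (hE.1 i hi).2)

theorem rpow_const {f : ℝ → ℝ} (hf : AbsolutelyContinuousOnInterval f a b)
    (hpos : ∀ x ∈ uIcc a b, 0 < f x) (p : ℝ) :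
    AbsolutelyContinuousOnInterval (fun x => f x ^ p) a b := by
  obtain ⟨m, hm, hmin⟩ := isCompact_uIcc.exists_isMinOn nonempty_uIcc hf.continuousOn
  obtain ⟨M, -, hmax⟩ := isCompact_uIcc.exists_isMaxOn nonempty_uIcc hf.continuousOn
  have hsmooth : ContDiffOn ℝ 1 (fun y : ℝ => y ^ p) (Icc (f m) (f M)) := fun y hy =>
    (Real.contDiffAt_rpow_const_of_ne (hpos m hm |>.trans_le hy.1).ne').contDiffWithinAt
  obtain ⟨K, hK⟩ := hsmooth.exists_lipschitzOnWith one_ne_zero (convex_Icc _ _) isCompact_Icc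
  exact hK.comp_absolutelyContinuousOnInterval hf fun x hx => ⟨hmin hx, hmax hx⟩

end AbsolutelyContinuousOnInterval

variable {a b : ℝ}

theorem absolutelyContinuousOnInterval_of_eq_add_integral {f f' : ℝ → ℝ}
    (hf' : IntervalIntegrable f' volume a b) (hf : ∀ x ∈ uIcc a b, f x = f a + ∫ t in a..x, f' t) :
    AbsolutelyContinuousOnInterval f a b := by
  refine AbsolutelyContinuousOnInterval.congr ?_ fun x hx => (hf x hx).symm
  exact (isometry_add_left (f a)).lipschitz.lipschitzOnWith.comp_absolutelyContinuousOnInterval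
    (hf'.absolutelyContinuousOnInterval_intervalIntegral left_mem_uIcc) (mapsTo_univ _ _)

theorem ae_hasDerivAt_of_eq_add_integral {f f' : ℝ → ℝ}
    (hf' : IntervalIntegrable f' volume a b) (hf : ∀ x ∈ uIcc a b, f x = f a + ∫ t in a..x, f' t) :
    ∀ᵐ x, x ∈ uIcc a b → HasDerivAt f (f' x) x := by
  have hne (c : ℝ) : ∀ᵐ x, x ≠ c := by simp [ae_iff, measure_singleton]
  filter_upwards [hf'.ae_hasDerivAt_integral, hne (min a b), hne (max a b)] with x hF hxa hxb hx
  have hIoo : x ∈ Ioo (min a b) (max a b) :=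
    ⟨lt_of_le_of_ne hx.1 (Ne.symm hxa), lt_of_le_of_ne hx.2 hxb⟩
  refine ((hF hx a left_mem_uIcc).const_add (f a)).congr_of_eventuallyEq ?_
  filter_upwards [Ioo_mem_nhds hIoo.1 hIoo.2] with y hy using hf y (Ioo_subset_Icc_self hy)

theorem AbsolutelyContinuousOnInterval.rpow_neg_le_add_integral {f g : ℝ → ℝ} {γ C : ℝ}
    (hab : a ≤ b) (hγ : 0 < γ) (hf : AbsolutelyContinuousOnInterval f a b)
    (hpos : ∀ x ∈ Icc a b, 0 < f x)
    (hode : ∀ᵐ x, x ∈ Icc a b → -deriv f x ≤ C * f x ^ (γ + 1) * g x)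
    (hg : IntervalIntegrable g volume a b) :
    f b ^ (-γ) ≤ f a ^ (-γ) + γ * C * ∫ x in a..b, g x := by
  rw [← uIcc_of_le hab] at hpos hode
  have hpow := hf.rpow_const hpos (-γ)
  have hderiv : ∀ᵐ x ∂volume.restrict (Icc a b),
      deriv (fun y => f y ^ (-γ)) x ≤ γ * C * g x := by
    rw [ae_restrict_iff' measurableSet_Icc, ← uIcc_of_le hab]
    filter_upwards [hf.ae_differentiableAt, hode] with x hdiff hx_ode hx
    have hfx := hpos x hx
    rw [((hdiff hx).hasDerivAt.rpow_const (Or.inl hfx.ne')).deriv]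
    have hcancel : f x ^ (-γ - 1) * f x ^ (γ + 1) = 1 := by
      rw [← Real.rpow_add hfx]; norm_num
    calc deriv f x * -γ * f x ^ (-γ - 1) = γ * f x ^ (-γ - 1) * -deriv f x := by ring
      _ ≤ γ * f x ^ (-γ - 1) * (C * f x ^ (γ + 1) * g x) := by
        gcongr
        exact hx_ode hx
      _ = γ * C * g x * (f x ^ (-γ - 1) * f x ^ (γ + 1)) := by ring
      _ = γ * C * g x := by rw [hcancel, mul_one]
  have hint := intervalIntegral.integral_mono_ae_restrict hab hpow.intervalIntegrable_deriv
    (hg.const_mul (γ * C)) hderiv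
  rw [hpow.integral_deriv_eq_sub, intervalIntegral.integral_const_mul] at hint
  linarith

theorem rpow_neg_le_add_integral_of_eq_add_integral {f f' g : ℝ → ℝ} {γ C : ℝ}
    (hab : a ≤ b) (hγ : 0 < γ) (hf' : IntervalIntegrable f' volume a b)
    (hf : ∀ x ∈ Icc a b, f x = f a + ∫ t in a..x, f' t) (hpos : ∀ x ∈ Icc a b, 0 < f x)
    (hode : ∀ᵐ x, x ∈ Icc a b → -f' x ≤ C * f x ^ (γ + 1) * g x)
    (hg : IntervalIntegrable g volume a b) :
    f b ^ (-γ) ≤ f a ^ (-γ) + γ * C * ∫ x in a..b, g x := by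
  rw [← uIcc_of_le hab] at hf
  refine (absolutelyContinuousOnInterval_of_eq_add_integral hf' hf).rpow_neg_le_add_integral
    hab hγ hpos ?_ hg
  filter_upwards [ae_hasDerivAt_of_eq_add_integral hf' hf, hode] with x hderiv hx_ode hx
  rw [(hderiv (uIcc_of_le hab ▸ hx)).deriv]
  exact hx_ode hx

theorem intervalIntegral_le_sqrt_mul_integral_sq {g : ℝ → ℝ} (hab : a ≤ b)
    (hg : MemLp g 2 (volume.restrict (Ioc a b))) :
    ∫ x in a..b, g x ≤ √((b - a) * ∫ x in a..b, g x ^ 2) := by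
  have hCS := integral_mul_norm_le_Lp_mul_Lq Real.HolderConjugate.two_two
    (by simpa using hg) (by simpa using memLp_const (1 : ℝ))
  simp only [norm_one, mul_one, integral_const, Real.norm_eq_abs,
    Real.rpow_two, sq_abs, smul_eq_mul] at hCS
  rw [intervalIntegral.integral_of_le hab, intervalIntegral.integral_of_le hab,
    Real.sqrt_mul (sub_nonneg.2 hab), mul_comm, Real.sqrt_eq_rpow, Real.sqrt_eq_rpow]
  simp only [measureReal_restrict_apply_univ, Real.volume_real_Ioc_of_le hab, one_pow,
    mul_one] at hCS
  exact (le_abs_self _).trans (abs_integral_le_integral_abs.trans hCS)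

theorem le_of_rpow_neg_le {x B γ : ℝ} (hγ : 0 < γ) (hx : 0 < x) (h : x ^ (-γ) ≤ B) :
    B ^ (-(1 / γ)) ≤ x := by
  calc B ^ (-(1 / γ)) ≤ (x ^ (-γ)) ^ (-(1 / γ)) :=
        Real.rpow_le_rpow_of_nonpos (by positivity) h (by simp [hγ.le])
    _ = x := by rw [← Real.rpow_mul hx.le, neg_mul_neg, mul_one_div_cancel hγ.ne', Real.rpow_one]

theorem exists_mul_rpow_le_of_rpow_neg_le_add_sqrt {x : ℝ → ℝ} {γ A K : ℝ} (hγ : 0 < γ)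
    (hA : 0 < A) (hK : 0 ≤ K) (hx : ∀ t, 1 ≤ t → 0 < x t)
    (h : ∀ t, 1 ≤ t → x t ^ (-γ) ≤ A + K * √t) :
    ∃ c > (0 : ℝ), ∀ t, 1 ≤ t → c * t ^ (-(1 / (2 * γ))) ≤ x t := by
  refine ⟨(A + K) ^ (-(1 / γ)), by positivity, fun t ht => ?_⟩
  have hsqrt : 1 ≤ √t := Real.one_le_sqrt.2 ht
  have hpow : (A + K) ^ (-(1 / γ)) * t ^ (-(1 / (2 * γ))) = ((A + K) * √t) ^ (-(1 / γ)) := by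
    rw [Real.mul_rpow (by positivity) (Real.sqrt_nonneg t), Real.sqrt_eq_rpow,
      ← Real.rpow_mul (by linarith)]
    ring_nf
  rw [hpow]
  exact le_of_rpow_neg_le hγ (hx t ht) ((h t ht).trans (by nlinarith))

theorem stmt18_general (γ C₀ E : ℝ) (hγ : 0 < γ) (hC₀ : 0 ≤ C₀)
    (f f' g : ℝ → ℝ)
    (hf : ∀ t, 0 ≤ t → f t ∈ Set.Ioc (0:ℝ) 1)
    (hf'int : ∀ a b : ℝ, 0 ≤ a → a ≤ b → IntervalIntegrable f' volume a b)
    (hFTC : ∀ a b : ℝ, 0 ≤ a → a ≤ b → f b - f a = ∫ t in a..b, f' t)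
    (hode : ∀ᵐ t ∂(volume.restrict (Set.Ici (0:ℝ))), -f' t ≤ C₀ * f t ^ (γ + 1) * g t)
    (hgm : Measurable g)
    (hgint : IntegrableOn (fun t => (g t) ^ 2) (Set.Ici (0:ℝ)))
    (hgE : (∫ t in Set.Ici (0:ℝ), (g t) ^ 2) ≤ E) :
    (∀ t : ℝ, 0 ≤ t →
      (f 0 ^ (-γ) + γ * C₀ * Real.sqrt (E * t)) ^ (-(1 / γ)) ≤ f t) ∧
    ∃ c > (0:ℝ), ∀ t : ℝ, 1 ≤ t → c * t ^ (-(1 / (2 * γ))) ≤ f t := by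
  have hg2 : MemLp g 2 (volume.restrict (Ici 0)) :=
    (memLp_two_iff_integrable_sq hgm.aestronglyMeasurable).2 hgint
  have hsub (t : ℝ) : Ioc 0 t ⊆ Ici 0 := Ioc_subset_Ioi_self.trans Ioi_subset_Ici_self
  have hdecay (t : ℝ) (ht : 0 ≤ t) : f t ^ (-γ) ≤ f 0 ^ (-γ) + γ * C₀ * √(E * t) := by
    have hgt : MemLp g 2 (volume.restrict (Ioc 0 t)) :=
      hg2.mono_measure (Measure.restrict_mono (hsub t) le_rfl)
    have henergy : ∫ x in 0..t, g x ^ 2 ≤ E := by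
      rw [intervalIntegral.integral_of_le ht]
      exact (setIntegral_mono_set hgint (Eventually.of_forall fun _ => sq_nonneg _)
        (hsub t).eventuallyLE).trans hgE
    calc f t ^ (-γ) ≤ f 0 ^ (-γ) + γ * C₀ * ∫ x in 0..t, g x :=
          rpow_neg_le_add_integral_of_eq_add_integral ht hγ (hf'int 0 t le_rfl ht)
            (fun x hx => by linarith [hFTC 0 x le_rfl hx.1]) (fun x hx => (hf x hx.1).1)
            ((ae_restrict_iff' measurableSet_Ici).1 hode |>.mono fun x hx hxt => hx hxt.1)
            ((intervalIntegrable_iff_integrableOn_Ioc_of_le ht).2 (hgt.integrable one_le_two))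
      _ ≤ f 0 ^ (-γ) + γ * C₀ * √((t - 0) * ∫ x in 0..t, g x ^ 2) := by
          gcongr
          exact intervalIntegral_le_sqrt_mul_integral_sq ht hgt
      _ ≤ f 0 ^ (-γ) + γ * C₀ * √(E * t) := by
          rw [sub_zero, mul_comm E]
          gcongr
  refine ⟨fun t ht => le_of_rpow_neg_le hγ (hf t ht).1 (hdecay t ht),
    exists_mul_rpow_le_of_rpow_neg_le_add_sqrt (A := f 0 ^ (-γ)) (K := γ * C₀ * √E) hγ
      (Real.rpow_pos_of_pos (hf 0 le_rfl).1 _) (by positivity)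
      (fun t ht => (hf t (by linarith)).1) fun t ht => ?_⟩
  rw [mul_assoc _ √E, ← Real.sqrt_mul' E (by linarith)]
  exact hdecay t (by linarith)

/-- a priori decay estimate for a positive locally absolutely continuous
function `f` (encoded as the indefinite integral of its locally integrable derivative `f'`)
satisfying `-f' ≤ C₀ f^{γ+1} g` with `∫₀^∞ g² ≤ E`; this controls the rate of degeneration
`1 − |b^±(t)|` of the Möbius transforms along the Teichmüller harmonic map flow. -/
theorem stmt18 (γ C₀ E : ℝ) (hγ : 0 < γ) (hC₀ : 0 ≤ C₀) (hE : 0 < E)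
    (f f' g : ℝ → ℝ)
    (hf : ∀ t, 0 ≤ t → f t ∈ Set.Ioc (0:ℝ) 1)
    (hf'int : ∀ a b : ℝ, 0 ≤ a → a ≤ b → IntervalIntegrable f' volume a b)
    (hFTC : ∀ a b : ℝ, 0 ≤ a → a ≤ b → f b - f a = ∫ t in a..b, f' t)
    (hode : ∀ᵐ t ∂(volume.restrict (Set.Ici (0:ℝ))), -f' t ≤ C₀ * f t ^ (γ + 1) * g t)
    (hg : ∀ t, 0 ≤ g t) (hgm : Measurable g)
    (hgint : IntegrableOn (fun t => (g t) ^ 2) (Set.Ici (0:ℝ)))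
    (hgE : (∫ t in Set.Ici (0:ℝ), (g t) ^ 2) ≤ E) :
    (∀ t : ℝ, 0 ≤ t →
      (f 0 ^ (-γ) + γ * C₀ * Real.sqrt (E * t)) ^ (-(1 / γ)) ≤ f t) ∧
    ∃ c > (0:ℝ), ∀ t : ℝ, 1 ≤ t → c * t ^ (-(1 / (2 * γ))) ≤ f t :=
  stmt18_general γ C₀ E hγ hC₀ f f' g hf hf'int hFTC hode hgm hgint hgE
end
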